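/- arXiv:2501.13733 — 2 statements merged into one kernel-verified Lean document; each statement's English description precedes it below -/
import Mathlib

section
/- For positive integers q, d with d < ⌈log₂ q⌉ and any x ∈ ℤ_q (represented as 0 ≤ x < q), letting x' = Decompress_q(Compress_q(x, d), d), we have |(x' - x) mod⁺ q| ≤ ⌈q / 2^(d+1)⌋, where ⌈·⌋ denotes rounding to the nearest integer (ties rounded up). -/
/-!
Modulo `q`, decompressing the compression of `x` gives the integer rounding of the point
`t · q/2^d` of the grid `(q/2^d)ℤ` nearest to `x`: the reduction of `t` modulo `2^d` only shifts
the result by a multiple of `q`. The distance to the nearest grid point is at most half the mesh,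
`q/2^(d+1)`, and neither the integer rounding nor the passage to the symmetric representative
increases it.
-/

/-- Symmetric representative of `r` modulo `q`. -/
def smod (r q : ℤ) : ℤ := if r % q ≤ q / 2 then r % q else r % q - q

/-- Rounding a rational to the nearest integer, ties rounded up. -/
def rnd (x : ℚ) : ℤ := ⌊x + 1 / 2⌋

/-- `Compress_q(x, d) = ⌈(2^d·x)/q⌋ mod 2^d`. -/
def compress (q : ℤ) (d : ℕ) (x : ℤ) : ℤ := rnd (((2 : ℚ) ^ d * x) / q) % 2 ^ d

/-- `Decompress_q(y, d) = ⌈(q·y)/2^d⌋ mod q`. -/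
def decompress (q : ℤ) (d : ℕ) (y : ℤ) : ℤ := rnd (((q : ℚ) * y) / 2 ^ d) % q

lemma rnd_le_add_half (a : ℚ) : (rnd a : ℚ) ≤ a + 1 / 2 := Int.floor_le _

lemma sub_half_lt_rnd (a : ℚ) : a - 1 / 2 < (rnd a : ℚ) := by
  have := Int.lt_floor_add_one (a + 1 / 2)
  unfold rnd
  linarith

lemma abs_rnd_sub_le (a : ℚ) : |(rnd a : ℚ) - a| ≤ 1 / 2 :=
  abs_le.2 ⟨by linarith [sub_half_lt_rnd a], by linarith [rnd_le_add_half a]⟩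

lemma rnd_sub_intCast (a : ℚ) (m : ℤ) : rnd (a - m) = rnd a - m := by
  unfold rnd
  rw [sub_add_eq_add_sub, Int.floor_sub_intCast]

lemma rnd_mono : Monotone rnd := fun _ _ h => Int.floor_le_floor (by linarith)

lemma neg_rnd_le_rnd_neg (a : ℚ) : -rnd a ≤ rnd (-a) := by
  have h : ((-rnd a - 1 : ℤ) : ℚ) < rnd (-a) := by
    push_cast
    linarith [sub_half_lt_rnd a, sub_half_lt_rnd (-a)]
  have : -rnd a - 1 < rnd (-a) := by exact_mod_cast h
  omega

lemma abs_rnd_le_rnd_of_abs_le {a b : ℚ} (h : |a| ≤ b) : |rnd a| ≤ rnd b := by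
  obtain ⟨hba, hab⟩ := abs_le.1 h
  exact abs_le.2 ⟨(neg_rnd_le_rnd_neg b).trans (rnd_mono hba), rnd_mono hab⟩

lemma abs_rnd_div_mul_sub_le {s : ℚ} (hs : 0 < s) (x : ℚ) : |rnd (x / s) * s - x| ≤ s / 2 := by
  have h : (rnd (x / s) : ℚ) * s - x = (rnd (x / s) - x / s) * s := by field_simp
  rw [h, abs_mul, abs_of_pos hs]
  nlinarith [abs_rnd_sub_le (x / s)]

lemma smod_congr {r s q : ℤ} (h : r ≡ s [ZMOD q]) : smod r q = smod s q := by
  unfold smod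
  rw [show r % q = s % q from h]

lemma abs_smod_le (r : ℤ) {q : ℤ} (hq : 0 < q) : |smod r q| ≤ |r| := by
  have hr : r % q + q * (r / q) = r := Int.emod_add_mul_ediv r q
  have hm0 : 0 ≤ r % q := Int.emod_nonneg r hq.ne'
  have hmq : r % q < q := Int.emod_lt_of_pos r hq
  unfold smod
  rcases lt_trichotomy (r / q) 0 with hk | hk | hk
  · have : q * (r / q) ≤ -q := by nlinarith
    split_ifs <;> rw [abs_le, abs_of_neg (by omega)] <;> constructor <;> omega
  · rw [hk, mul_zero, add_zero] at hr
    split_ifs <;> rw [abs_le, abs_of_nonneg (by omega)] <;> constructor <;> omega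
  · have : q ≤ q * (r / q) := by nlinarith
    split_ifs <;> rw [abs_le, abs_of_pos (by omega)] <;> constructor <;> omega

lemma decompress_emod_two_pow (q : ℤ) (d : ℕ) (y : ℤ) :
    decompress q d (y % 2 ^ d) ≡ rnd (q * y / 2 ^ d) [ZMOD q] := by
  have h : (q : ℚ) * ((y % 2 ^ d : ℤ) : ℚ) / 2 ^ d = q * y / 2 ^ d - ((q * (y / 2 ^ d) : ℤ) : ℚ) := by
    rw [Int.emod_def]
    push_cast
    field_simp
  unfold decompress
  rw [h, rnd_sub_intCast]
  simp [Int.ModEq, Int.sub_emod]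

theorem decompress_compress_close_general (q : ℤ) (d : ℕ) (hq : 0 < q) (x : ℤ) :
    |smod (decompress q d (compress q d x) - x) q| ≤ rnd ((q : ℚ) / 2 ^ (d + 1)) := by
  set t := rnd ((2 : ℚ) ^ d * x / q)
  have hmesh : (0 : ℚ) < q / 2 ^ d := by positivity
  have hcong : decompress q d (compress q d x) - x ≡ rnd (t * (q / 2 ^ d) - x) [ZMOD q] := by
    rw [rnd_sub_intCast, show (t : ℚ) * (q / 2 ^ d) = q * t / 2 ^ d by ring]
    exact (decompress_emod_two_pow q d t).sub_right x
  have herr : |(t : ℚ) * (q / 2 ^ d) - x| ≤ q / 2 ^ (d + 1) := by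
    have h := abs_rnd_div_mul_sub_le hmesh x
    rwa [show (x : ℚ) / (q / 2 ^ d) = 2 ^ d * x / q by field_simp,
      show (q : ℚ) / 2 ^ d / 2 = q / 2 ^ (d + 1) by ring] at h
  calc |smod (decompress q d (compress q d x) - x) q|
      = |smod (rnd (t * (q / 2 ^ d) - x)) q| := by rw [smod_congr hcong]
    _ ≤ |rnd (t * (q / 2 ^ d) - x)| := abs_smod_le _ hq
    _ ≤ rnd (q / 2 ^ (d + 1)) := abs_rnd_le_rnd_of_abs_le herr

/-- Decompression of compression is close to the original:
`|(x' - x) mod⁺ q| ≤ ⌈q/2^(d+1)⌋`. -/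
theorem decompress_compress_close (q : ℤ) (d : ℕ) (hq : 0 < q) (hd : 0 < d)
    (hlog : d < Nat.clog 2 q.toNat) (x : ℤ) (hx0 : 0 ≤ x) (hxq : x < q) :
    |smod (decompress q d (compress q d x) - x) q| ≤ rnd ((q : ℚ) / 2 ^ (d + 1)) :=
  decompress_compress_close_general q d hq x
end

section
/- Suppose in Kyber's CPA scheme the total noise term w = eᵀr + e₂ + c_v - sᵀe₁ + c_tᵀr - sᵀc_u satisfies ‖w‖_∞ < ⌊q/4⌋. Then decryption is correct: Compress_q(v - sᵀu, 1) = m, where v - sᵀu = ⌈q/2⌋·m + w in R_q. -/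
lemma floor_div_pos (a b : ℤ) (hb : 0 < b) : ⌊(a:ℚ)/(b:ℚ)⌋ = a / b := by
  lift b to ℕ using hb.le
  exact_mod_cast Rat.floor_intCast_div_natCast a b

lemma ediv_eq_of (a b k : ℤ) (hb : 0 < b) (h1 : k * b ≤ a) (h2 : a < (k+1) * b) : a / b = k := by
  have h3 : k ≤ a / b := (Int.le_ediv_iff_mul_le hb).2 h1
  have h4 : a / b < k + 1 := (Int.ediv_lt_iff_lt_mul hb).2 h2
  omega

/-- Kyber CPA decryption correctness: if the decryption intermediate
`v - sᵀu = ⌈q/2⌋·m + w` in `R_q` (coefficientwise, with `u i` the representative of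
the `i`-th coefficient in `{0, ..., q-1}`), where `m` has coefficients in `{0,1}` and
the total noise `w` satisfies `‖w‖_∞ < ⌊q/4⌋`, then coefficientwise decoding
`Compress_q(·, 1)` recovers `m`. -/
theorem kyber_cpa_decrypt_correct (n : ℕ) (hn : 0 < n) (q : ℤ) (hq : 0 < q)
    (m w u : Fin n → ℤ)
    (hm : ∀ i, m i = 0 ∨ m i = 1)
    (hw : ∀ i, |smod (w i) q| < q / 4)
    (hu : ∀ i, 0 ≤ u i ∧ u i < q ∧ u i ≡ rnd ((q : ℚ) / 2) * m i + w i [ZMOD q]) :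
    ∀ i, compress q 1 (u i) = m i := by
  -- preliminaries
  have hH : rnd ((q : ℚ) / 2) = (q + 1) / 2 := by
    unfold rnd
    have h : (q:ℚ)/2 + 1/2 = ((q+1 : ℤ) : ℚ) / ((2:ℤ) : ℚ) := by push_cast; ring
    rw [h, floor_div_pos _ _ (by norm_num)]
  have hcomp : ∀ x : ℤ, compress q 1 x = ((4*x + q) / (2*q)) % 2 := by
    intro x
    unfold compress rnd
    have h : (2:ℚ)^1 * x / q + 1/2 = ((4*x + q : ℤ) : ℚ) / ((2*q : ℤ) : ℚ) := by
      have hq' : (q:ℚ) ≠ 0 := by exact_mod_cast hq.ne'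
      push_cast
      field_simp
      ring
    rw [h, floor_div_pos _ _ (by linarith)]
    norm_num
  intro i
  obtain ⟨hu0, hu1, hcong⟩ := hu i
  set W := smod (w i) q with hWdef
  -- W ≡ w i mod q
  have hdvdW : q ∣ w i - W := by
    have h1 := Int.emod_add_mul_ediv (w i) q
    rw [hWdef]
    unfold smod
    split
    · exact ⟨w i / q, by linarith⟩
    · exact ⟨w i / q + 1, by linarith⟩
  have habs : -(q/4) < W ∧ W < q/4 := abs_lt.mp (hw i)
  have hq4 : 4 ≤ q := by
    have := abs_nonneg W
    have := hw i
    omega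
  -- combined congruence: q ∣ (H * m i + W - u i)
  have hWw : w i ≡ W [ZMOD q] := (Int.modEq_iff_dvd.2 hdvdW).symm
  have hcong2 : u i ≡ rnd ((q : ℚ) / 2) * m i + W [ZMOD q] :=
    hcong.trans (Int.ModEq.add_left _ hWw)
  rw [hH] at hcong2
  have hd : q ∣ (q + 1) / 2 * m i + W - u i := Int.ModEq.dvd hcong2
  rw [hcomp]
  rcases hm i with h0 | h1
  · -- m i = 0
    rw [h0, mul_zero, zero_add] at hd
    rcases le_or_gt 0 W with hWpos | hWneg
    · have heq : W - u i = 0 := Int.eq_zero_of_abs_lt_dvd hd (by rw [abs_lt]; omega)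
      have hui : u i = W := by omega
      rw [h0, hui, ediv_eq_of (4*W + q) (2*q) 0 (by linarith) (by omega) (by omega)]
      decide
    · have h2 : q ∣ W + q - u i := by
        have h3 := dvd_add hd (dvd_refl q)
        have h4 : W - u i + q = W + q - u i := by ring
        rwa [h4] at h3
      have habs2 : |W + q - u i| < q := by rw [abs_lt]; omega
      have heq : W + q - u i = 0 := Int.eq_zero_of_abs_lt_dvd h2 habs2
      have hui : u i = W + q := by omega
      rw [h0, hui, ediv_eq_of (4*(W+q) + q) (2*q) 2 (by linarith) (by omega) (by omega)]
      decide
  · -- m i = 1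
    rw [h1, mul_one] at hd
    have heq : (q + 1) / 2 + W - u i = 0 :=
      Int.eq_zero_of_abs_lt_dvd hd (by rw [abs_lt]; omega)
    have hui : u i = (q + 1) / 2 + W := by omega
    rw [h1, hui, ediv_eq_of (4*((q+1)/2 + W) + q) (2*q) 1 (by linarith) (by omega) (by omega)]
    decide
end
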